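/- Let H be finite-dimensional, and for each n let φ_n be a completely positive unital endomorphism of B(H^{⊗n}) commuting with permutations (φ_n(U_π* A U_π) = U_π* φ_n(A) U_π). Let {e_j}_{j∈J} be an orthonormal basis of H. Define Markov transition matrices K_n on J^n by K_n((j_1,…,j_n),(j'_1,…,j'_n)) = Tr[(P_{e_{j_1}} ⊗ ⋯ ⊗ P_{e_{j_n}}) φ_n(P_{e_{j'_1}} ⊗ ⋯ ⊗ P_{e_{j'_n}})]. If {φ_n} propagates quantum molecular chaos, then {K_n} propagates molecular chaos in the classical sense. -/

import Mathlib

open Filter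
open scoped BigOperators ComplexOrder

namespace QC

variable {α : Type*} [Fintype α] [DecidableEq α]

/-- The positive semidefinite square root (the old Mathlib `Matrix.PosSemidef.sqrt`). -/
noncomputable def psdSqrt {A : Matrix α α ℂ} (hA : A.PosSemidef) : Matrix α α ℂ :=
  hA.1.eigenvectorUnitary.1 * Matrix.diagonal ((↑) ∘ (√·) ∘ hA.1.eigenvalues) *
    (star hA.1.eigenvectorUnitary : Matrix α α ℂ)

/-- The trace norm (Schatten 1-norm) of a matrix: the trace of `√(AᴴA)`. -/
noncomputable def traceNorm (A : Matrix α α ℂ) : ℝ :=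
  (psdSqrt (Matrix.posSemidef_conjTranspose_mul_self A)).trace.re

/-- A density operator: a positive semidefinite matrix of trace one. -/
def IsDensity (A : Matrix α α ℂ) : Prop := A.PosSemidef ∧ A.trace = 1

variable {ι : Type*} [Fintype ι] [DecidableEq ι]

/-- Tensor product of `n` operators on `H`, as an operator on `H^{⊗n}`
(with `H = ℂ^ι`, and `H^{⊗n}` identified with `ℂ^(Fin n → ι)`). -/
def tprod {n : ℕ} (A : Fin n → Matrix ι ι ℂ) : Matrix (Fin n → ι) (Fin n → ι) ℂ :=
  Matrix.of fun x y => ∏ i, A i (x i) (y i)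

/-- `k`-fold tensor power of an operator. -/
def tpow (A : Matrix ι ι ℂ) (k : ℕ) : Matrix (Fin k → ι) (Fin k → ι) ℂ :=
  tprod (fun _ => A)

/-- Extend a multi-index on the first `k` coordinates by one on the last `n - k`. -/
def extend {k n : ℕ} (h : k ≤ n) (x : Fin k → ι) (z : Fin (n - k) → ι) : Fin n → ι :=
  fun i => if h' : (i : ℕ) < k then x ⟨i, h'⟩ else z ⟨(i : ℕ) - k, by
    have := i.isLt; omega⟩

/-- Partial trace over the last `n - k` tensor factors. -/
noncomputable def ptrace {k n : ℕ} (h : k ≤ n) (M : Matrix (Fin n → ι) (Fin n → ι) ℂ) :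
    Matrix (Fin k → ι) (Fin k → ι) ℂ :=
  Matrix.of fun x y => ∑ z : Fin (n - k) → ι, M (extend h x z) (extend h y z)

/-- The permutation unitary `U_π` on `H^{⊗n}`, `U_π (x₁ ⊗ ⋯ ⊗ xₙ) = x_{π(1)} ⊗ ⋯ ⊗ x_{π(n)}`. -/
def Umat {n : ℕ} (π : Equiv.Perm (Fin n)) : Matrix (Fin n → ι) (Fin n → ι) ℂ :=
  Matrix.of fun x y => if x = y ∘ π then 1 else 0

/-- `{D n}` is `E`-chaotic in the quantum sense: for each fixed `k` the `k`-marginals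
(partial traces) converge in trace norm to `E^{⊗k}`. -/
def QChaotic (D : ∀ n, Matrix (Fin n → ι) (Fin n → ι) ℂ) (E : Matrix ι ι ℂ) : Prop :=
  ∀ k : ℕ, Tendsto
    (fun n => traceNorm (ptrace (Nat.le_add_right k n) (D (k + n)) - tpow E k))
    atTop (nhds 0)

/-- Flatten a `d × d` matrix of operators on `H` into an operator on `ℂ^d ⊗ H`. -/
def blockify {d : ℕ} (M : Matrix (Fin d) (Fin d) (Matrix α α ℂ)) :
    Matrix (Fin d × α) (Fin d × α) ℂ :=
  Matrix.of fun p q => M p.1 q.1 p.2 q.2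

/-- Complete positivity: every finite matrix ampliation preserves positivity. -/
def IsCP (φ : Matrix α α ℂ →ₗ[ℂ] Matrix α α ℂ) : Prop :=
  ∀ (d : ℕ) (M : Matrix (Fin d) (Fin d) (Matrix α α ℂ)),
    (blockify M).PosSemidef → (blockify (M.map ⇑φ)).PosSemidef

/-- The predual (Schrödinger picture) of a map `φ` on `B(H)`, determined by
`Tr(φ⁎(D) A) = Tr(D φ(A))` for all `A`. -/
noncomputable def predual (φ : Matrix α α ℂ →ₗ[ℂ] Matrix α α ℂ) (D : Matrix α α ℂ) :
    Matrix α α ℂ :=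
  Matrix.of fun a b => (D * φ (Matrix.single b a 1)).trace

/-- `{φ_n}` propagates quantum molecular chaos: quantum molecular chaos of `{D_n}`
entails quantum molecular chaos of `{φ_{n*}(D_n)}`. -/
def PropagatesQMC
    (φ : ∀ n, Matrix (Fin n → ι) (Fin n → ι) ℂ →ₗ[ℂ] Matrix (Fin n → ι) (Fin n → ι) ℂ) :
    Prop :=
  ∀ (D : ∀ n, Matrix (Fin n → ι) (Fin n → ι) ℂ) (E : Matrix ι ι ℂ),
    (∀ n, IsDensity (D n)) →
    (∀ n (π : Equiv.Perm (Fin n)), D n * Umat π = Umat π * D n) →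
    IsDensity E → QChaotic D E →
    ∃ E' : Matrix ι ι ℂ, IsDensity E' ∧ QChaotic (fun n => predual (φ n) (D n)) E'

/-- The `k`-marginal of a probability distribution on `J^n`, `J` finite. -/
def cmarg {J : Type*} [Fintype J] {k n : ℕ} (h : k ≤ n) (p : (Fin n → J) → ℝ)
    (y : Fin k → J) : ℝ :=
  ∑ z : Fin (n - k) → J, p (extend h y z)

/-- `{p_n}` is `q`-chaotic (classically): marginals converge (weakly, i.e. pointwise on a
discrete space) to products. -/
def CChaotic {J : Type*} [Fintype J] (p : ∀ n, (Fin n → J) → ℝ) (q : J → ℝ) : Prop :=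
  ∀ (k : ℕ) (y : Fin k → J),
    Tendsto (fun n => cmarg (Nat.le_add_right k n) (p (k + n)) y)
      atTop (nhds (∏ i, q (y i)))

/-- A sequence of Markov transition matrices `{K_n}` on `J^n` propagates chaos
classically: it maps chaotic sequences of symmetric probability distributions to
chaotic sequences. -/
def PropagatesCMC {J : Type*} [Fintype J]
    (K : ∀ n, (Fin n → J) → (Fin n → J) → ℝ) : Prop :=
  ∀ (p : ∀ n, (Fin n → J) → ℝ) (q : J → ℝ),
    (∀ n x, 0 ≤ p n x) → (∀ n, ∑ x, p n x = 1) →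
    (∀ n (π : Equiv.Perm (Fin n)) (x : Fin n → J), p n (x ∘ π) = p n x) →
    (∀ j, 0 ≤ q j) → (∑ j, q j = 1) → CChaotic p q →
    ∃ q' : J → ℝ, (∀ j, 0 ≤ q' j) ∧ (∑ j, q' j = 1)
      ∧ CChaotic (fun n x' => ∑ x, p n x * K n x x') q'

/-! Classical distributions are embedded as diagonal density matrices. Partial traces of
diagonal matrices are the diagonal matrices of the marginals, tensor powers of diagonal
matrices are diagonal, and a symmetric `p_n` gives a diagonal matrix commuting with every
`U_π`. In finite dimension the trace norm is equivalent to the Hilbert–Schmidt norm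
(`‖M‖₂² ≤ ‖M‖₁² ≤ d ‖M‖₂²`), so trace-norm convergence is entrywise convergence: classical
chaos of `p` is quantum chaos of `diag p`, and the diagonal of a quantum chaotic sequence is
classically chaotic. Since the diagonal of `φ_{n*}(diag p_n)` is `x' ↦ ∑ₓ p_n(x) K_n(x, x')`,
the limit `E'` supplied by quantum propagation yields `q' = diag E'`. -/

open Matrix

lemma trace_psdSqrt {A : Matrix α α ℂ} (hA : A.PosSemidef) :
    (psdSqrt hA).trace = ∑ i, ((√(hA.1.eigenvalues i) : ℝ) : ℂ) := by
  rw [psdSqrt, trace_mul_cycle, Unitary.coe_star_mul_self, one_mul,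
    trace_diagonal]
  rfl

lemma traceNorm_eq_sum_sqrt_eigenvalues (M : Matrix α α ℂ) :
    traceNorm M = ∑ i, √((posSemidef_conjTranspose_mul_self M).1.eigenvalues i) := by
  rw [traceNorm, trace_psdSqrt, Complex.re_sum]
  simp only [Complex.ofReal_re]

lemma traceNorm_nonneg (M : Matrix α α ℂ) : 0 ≤ traceNorm M := by
  rw [traceNorm_eq_sum_sqrt_eigenvalues]
  exact Finset.sum_nonneg fun i _ => Real.sqrt_nonneg _

lemma re_trace_conjTranspose_mul_self {m n : Type*} [Fintype m] [Fintype n]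
    (M : Matrix m n ℂ) :
    (Mᴴ * M).trace.re = ∑ a, ∑ b, ‖M a b‖ ^ 2 := by
  rw [Finset.sum_comm]
  simp only [trace, diag, mul_apply, conjTranspose_apply,
    Complex.re_sum, RCLike.star_def, ← Complex.normSq_eq_conj_mul_self, Complex.ofReal_re,
    Complex.normSq_eq_norm_sq]

lemma sum_eigenvalues_conjTranspose_mul_self (M : Matrix α α ℂ) :
    ∑ i, (posSemidef_conjTranspose_mul_self M).1.eigenvalues i = ∑ a, ∑ b, ‖M a b‖ ^ 2 := by
  rw [← re_trace_conjTranspose_mul_self,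
    (posSemidef_conjTranspose_mul_self M).1.trace_eq_sum_eigenvalues, Complex.re_sum]
  simp only [Complex.coe_algebraMap, Complex.ofReal_re]

lemma sum_norm_sq_le_sq_traceNorm (M : Matrix α α ℂ) :
    ∑ a, ∑ b, ‖M a b‖ ^ 2 ≤ traceNorm M ^ 2 := by
  set hM := (posSemidef_conjTranspose_mul_self M)
  rw [← sum_eigenvalues_conjTranspose_mul_self, traceNorm_eq_sum_sqrt_eigenvalues]
  calc ∑ i, hM.1.eigenvalues i = ∑ i, √(hM.1.eigenvalues i) ^ 2 :=
        Finset.sum_congr rfl fun i _ => (Real.sq_sqrt (hM.eigenvalues_nonneg i)).symm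
    _ ≤ _ := Finset.sum_sq_le_sq_sum_of_nonneg fun i _ => Real.sqrt_nonneg _

lemma sq_traceNorm_le_card_mul_sum_norm_sq (M : Matrix α α ℂ) :
    traceNorm M ^ 2 ≤ Fintype.card α * ∑ a, ∑ b, ‖M a b‖ ^ 2 := by
  set hM := (posSemidef_conjTranspose_mul_self M)
  rw [← sum_eigenvalues_conjTranspose_mul_self, traceNorm_eq_sum_sqrt_eigenvalues]
  calc (∑ i, √(hM.1.eigenvalues i)) ^ 2 ≤ Fintype.card α * ∑ i, √(hM.1.eigenvalues i) ^ 2 :=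
        sq_sum_le_card_mul_sum_sq
    _ = _ := by
      congr 1
      exact Finset.sum_congr rfl fun i _ => Real.sq_sqrt (hM.eigenvalues_nonneg i)

lemma norm_apply_le_traceNorm (M : Matrix α α ℂ) (a b : α) : ‖M a b‖ ≤ traceNorm M := by
  refine le_of_sq_le_sq ?_ (traceNorm_nonneg M)
  calc ‖M a b‖ ^ 2 ≤ ∑ b', ‖M a b'‖ ^ 2 :=
        Finset.single_le_sum (f := fun b' => ‖M a b'‖ ^ 2) (fun _ _ => by positivity)
          (Finset.mem_univ b)
    _ ≤ ∑ a', ∑ b', ‖M a' b'‖ ^ 2 :=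
        Finset.single_le_sum (f := fun a' => ∑ b', ‖M a' b'‖ ^ 2) (fun _ _ => by positivity)
          (Finset.mem_univ a)
    _ ≤ _ := sum_norm_sq_le_sq_traceNorm M

lemma tendsto_traceNorm_nhds_zero_iff {β : Type*} {l : Filter β} {M : β → Matrix α α ℂ} :
    Tendsto (fun t => traceNorm (M t)) l (nhds 0) ↔ Tendsto M l (nhds 0) := by
  constructor
  · intro h
    refine tendsto_pi_nhds.2 fun a => tendsto_pi_nhds.2 fun b => ?_
    exact squeeze_zero_norm (fun t => norm_apply_le_traceNorm (M t) a b) h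
  · intro h
    have hbound : Tendsto (fun N : Matrix α α ℂ => √(Fintype.card α * ∑ a, ∑ b, ‖N a b‖ ^ 2))
        (nhds 0) (nhds 0) :=
      Continuous.tendsto' (by fun_prop) 0 0 (by simp)
    exact squeeze_zero (fun t => traceNorm_nonneg _)
      (fun t => Real.le_sqrt_of_sq_le (sq_traceNorm_le_card_mul_sum_norm_sq (M t))) (hbound.comp h)

lemma qChaotic_iff {D : ∀ n, Matrix (Fin n → ι) (Fin n → ι) ℂ} {E : Matrix ι ι ℂ} :
    QChaotic D E ↔ ∀ k,
      Tendsto (fun n => ptrace (Nat.le_add_right k n) (D (k + n))) atTop (nhds (tpow E k)) := by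
  simp only [QChaotic, tendsto_traceNorm_nhds_zero_iff, tendsto_sub_nhds_zero_iff]

lemma IsDensity.sum_re_apply_self {m : Type*} [Fintype m] {A : Matrix m m ℂ}
    (hA : IsDensity A) : ∑ a, (A a a).re = 1 := by
  simpa [trace, Complex.re_sum] using congrArg Complex.re hA.2

lemma isDensity_diagonal_ofReal {p : α → ℝ} (hp0 : ∀ a, 0 ≤ p a) (hp1 : ∑ a, p a = 1) :
    IsDensity (diagonal fun a => (p a : ℂ)) :=
  ⟨posSemidef_diagonal_iff.2 fun a => Complex.zero_le_real.2 (hp0 a),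
    by rw [trace_diagonal, ← Complex.ofReal_sum, hp1, Complex.ofReal_one]⟩

lemma diagonal_mul_Umat_comm {n : ℕ} {π : Equiv.Perm (Fin n)} {d : (Fin n → ι) → ℂ}
    (hd : ∀ x, d (x ∘ π) = d x) : diagonal d * Umat π = Umat π * diagonal d := by
  ext x y
  by_cases hxy : x = y ∘ π
  · simp [Umat, hxy, hd]
  · simp [Umat, hxy]

lemma extend_castLE {κ : Type*} {k n : ℕ} (h : k ≤ n) (x : Fin k → κ) (z : Fin (n - k) → κ)
    (i : Fin k) :
    extend h x z (Fin.castLE h i) = x i := by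
  simp [extend]

lemma extend_ne_extend {κ : Type*} {k n : ℕ} (h : k ≤ n) {x y : Fin k → κ} (hxy : x ≠ y)
    (z w : Fin (n - k) → κ) : extend h x z ≠ extend h y w := by
  obtain ⟨i, hi⟩ := Function.ne_iff.1 hxy
  intro heq
  exact hi (by simpa only [extend_castLE] using congrFun heq (Fin.castLE h i))

lemma ptrace_diagonal {k n : ℕ} (h : k ≤ n) (d : (Fin n → ι) → ℂ) :
    ptrace h (diagonal d) = diagonal fun y => ∑ z : Fin (n - k) → ι, d (extend h y z) := by
  ext x y
  rcases eq_or_ne x y with rfl | hxy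
  · simp [ptrace]
  · simp [ptrace, hxy, extend_ne_extend h hxy]

lemma tpow_diagonal {κ : Type*} [DecidableEq κ] (d : κ → ℂ) (k : ℕ) :
    tpow (diagonal d) k = diagonal fun y : Fin k → κ => ∏ i, d (y i) := by
  ext x y
  rcases eq_or_ne x y with rfl | hxy
  · simp [tpow, tprod]
  · obtain ⟨i, hi⟩ := Function.ne_iff.1 hxy
    simpa [tpow, tprod, hxy] using
      Finset.prod_eq_zero (Finset.mem_univ i) (diagonal_apply_ne d hi)

lemma tprod_single_one {κ : Type*} [DecidableEq κ] {n : ℕ} (x y : Fin n → κ) :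
    (tprod fun i => single (x i) (y i) (1 : ℂ)) = single x y 1 := by
  ext a b
  simp [tprod, single, Finset.prod_ite_zero, funext_iff, forall_and]

lemma predual_diagonal_apply_self (φ : Matrix α α ℂ →ₗ[ℂ] Matrix α α ℂ) (d : α → ℂ) (b : α) :
    predual φ (diagonal d) b b = ∑ a, d a * φ (single b b 1) a a := by
  simp [predual, trace, diagonal_mul]

lemma CChaotic.qChaotic_diagonal {p : ∀ n, (Fin n → ι) → ℝ} {q : ι → ℝ} (hpq : CChaotic p q) :
    QChaotic (fun n => diagonal fun x => (p n x : ℂ)) (diagonal fun j => (q j : ℂ)) := by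
  refine qChaotic_iff.2 fun k => ?_
  simp only [ptrace_diagonal, tpow_diagonal, ← Complex.ofReal_sum, ← Complex.ofReal_prod]
  refine (continuous_id.matrix_diagonal.tendsto _).comp (tendsto_pi_nhds.2 fun y => ?_)
  exact (Complex.continuous_ofReal.tendsto _).comp (hpq k y)

lemma QChaotic.cChaotic_re_diag {D : ∀ n, Matrix (Fin n → ι) (Fin n → ι) ℂ}
    {E : Matrix ι ι ℂ} (hDE : QChaotic D E) (hE : E.IsHermitian) :
    CChaotic (fun n x => (D n x x).re) (fun j => (E j j).re) := by
  intro k y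
  have hdiag (j : ι) : ((E j j).re : ℂ) = E j j := by simpa using hE.coe_re_apply_self j
  have hprod : (tpow E k y y).re = ∏ i, (E (y i) (y i)).re := by
    rw [← Complex.ofReal_re (∏ i, (E (y i) (y i)).re), Complex.ofReal_prod]
    simp only [hdiag, tpow, tprod, of_apply]
  have hentry : Tendsto (fun n => (ptrace (Nat.le_add_right k n) (D (k + n)) y y).re) atTop
      (nhds (tpow E k y y).re) :=
    (Complex.continuous_re.tendsto _).comp (((qChaotic_iff.1 hDE k).apply_nhds y).apply_nhds y)
  rw [hprod] at hentry
  simpa [cmarg, ptrace, Complex.re_sum] using hentry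

theorem quantum_to_classical_propagation_general
    (φ : ∀ n, Matrix (Fin n → ι) (Fin n → ι) ℂ →ₗ[ℂ] Matrix (Fin n → ι) (Fin n → ι) ℂ)
    (hqmc : PropagatesQMC φ) :
    PropagatesCMC (fun n x x' =>
      ((tprod fun i => Matrix.single (x i) (x i) (1 : ℂ)) *
        φ n (tprod fun i => Matrix.single (x' i) (x' i) (1 : ℂ))).trace.re) := by
  intro p q hp0 hp1 hpsym hq0 hq1 hpq
  obtain ⟨E', hE', hchaos⟩ := hqmc (fun n => diagonal fun x => (p n x : ℂ))
    (diagonal fun j => (q j : ℂ)) (fun n => isDensity_diagonal_ofReal (hp0 n) (hp1 n))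
    (fun n π => diagonal_mul_Umat_comm fun x => by rw [hpsym])
    (isDensity_diagonal_ofReal hq0 hq1) hpq.qChaotic_diagonal
  refine ⟨fun j => (E' j j).re, fun j => (Complex.nonneg_iff.1 hE'.1.diag_nonneg).1,
    hE'.sum_re_apply_self, ?_⟩
  convert hchaos.cChaotic_re_diag hE'.1.1 using 3 with n x'
  simp only [tprod_single_one, trace_single_mul, one_smul, predual_diagonal_apply_self,
    Complex.re_sum, Complex.re_ofReal_mul]

/-- **Quantum propagation of chaos yields classical propagation of chaos
(periodic measurement of complete observables, finite dimensions).**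
For completely positive unital permutation-covariant maps `φ_n` on `B(H^{⊗n})`
(`H = ℂ^ι` finite dimensional) and an orthonormal basis `{e_j}_{j∈ι}`, define
`K_n(j⃗, j⃗') = Tr[(P_{e_{j₁}} ⊗ ⋯ ⊗ P_{e_{jₙ}}) φ_n(P_{e_{j'₁}} ⊗ ⋯ ⊗ P_{e_{j'ₙ}})]`.
If `{φ_n}` propagates quantum molecular chaos, then `{K_n}` propagates molecular chaos
in the classical sense. -/
theorem quantum_to_classical_propagation
    (φ : ∀ n, Matrix (Fin n → ι) (Fin n → ι) ℂ →ₗ[ℂ] Matrix (Fin n → ι) (Fin n → ι) ℂ)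
    (hcp : ∀ n, IsCP (φ n)) (hunital : ∀ n, φ n 1 = 1)
    (hperm : ∀ n (π : Equiv.Perm (Fin n)) (A : Matrix (Fin n → ι) (Fin n → ι) ℂ),
      φ n ((Umat π).conjTranspose * A * Umat π) = (Umat π).conjTranspose * φ n A * Umat π)
    (hqmc : PropagatesQMC φ) :
    PropagatesCMC (fun n x x' =>
      ((tprod fun i => Matrix.single (x i) (x i) (1 : ℂ)) *
        φ n (tprod fun i => Matrix.single (x' i) (x' i) (1 : ℂ))).trace.re) :=
  quantum_to_classical_propagation_general φ hqmc

end QC
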